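/- Let k be a field, V a nonzero finite-dimensional k-vector space, and Δ : End(V) → End(V ⊗ V) a unital k-algebra homomorphism which is coassociative, i.e. the two unital algebra homomorphisms End(V) → End(V ⊗ V ⊗ V) obtained by following Δ with Δ applied to the first, respectively the second, End(V) tensor factor of End(V ⊗ V) ≅ End(V) ⊗ End(V) coincide. Then there exist a finite-dimensional k-vector space M, a k-linear isomorphism F : V ⊗ M → V ⊗ V and a k-linear automorphism Φ of M ⊗ M such that (F, Φ) satisfies the modified pentagon equation and Δ(x) = F ∘ (x ⊗ id_M) ∘ F⁻¹ for all x ∈ End(V). -/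

import Mathlib

open TensorProduct

noncomputable section

variable {k : Type*} [Field k]

/-- Apply `G` to tensor factors 1 and 2 of a triple tensor product. -/
def m12 {A B C P Q : Type*}
    [AddCommGroup A] [AddCommGroup B] [AddCommGroup C] [AddCommGroup P] [AddCommGroup Q]
    [Module k A] [Module k B] [Module k C] [Module k P] [Module k Q]
    (G : A ⊗[k] B →ₗ[k] P ⊗[k] Q) :
    A ⊗[k] (B ⊗[k] C) →ₗ[k] P ⊗[k] (Q ⊗[k] C) :=
  (TensorProduct.assoc k P Q C).toLinearMap ∘ₗ G.rTensor C ∘ₗ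
    (TensorProduct.assoc k A B C).symm.toLinearMap

/-- Apply `G` to tensor factors 2 and 3 of a triple tensor product. -/
def m23 {A B C Q R : Type*}
    [AddCommGroup A] [AddCommGroup B] [AddCommGroup C] [AddCommGroup Q] [AddCommGroup R]
    [Module k A] [Module k B] [Module k C] [Module k Q] [Module k R]
    (G : B ⊗[k] C →ₗ[k] Q ⊗[k] R) :
    A ⊗[k] (B ⊗[k] C) →ₗ[k] A ⊗[k] (Q ⊗[k] R) :=
  G.lTensor A

/-- Apply `G` to tensor factors 1 and 3 of a triple tensor product. -/
def m13 {A B C P R : Type*}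
    [AddCommGroup A] [AddCommGroup B] [AddCommGroup C] [AddCommGroup P] [AddCommGroup R]
    [Module k A] [Module k B] [Module k C] [Module k P] [Module k R]
    (G : A ⊗[k] C →ₗ[k] P ⊗[k] R) :
    A ⊗[k] (B ⊗[k] C) →ₗ[k] P ⊗[k] (B ⊗[k] R) :=
  ((TensorProduct.comm k R B).toLinearMap.lTensor P) ∘ₗ
    (TensorProduct.assoc k P R B).toLinearMap ∘ₗ G.rTensor B ∘ₗ
    (TensorProduct.assoc k A C B).symm.toLinearMap ∘ₗ
    ((TensorProduct.comm k B C).toLinearMap.lTensor A)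

/-- The modified pentagon equation for a pair `(F, Φ)`:
`F₁₂ ∘ F₁₃ ∘ Φ₂₃ = F₂₃ ∘ F₁₂` as maps `V ⊗ M ⊗ M → V ⊗ V ⊗ V`. -/
def MPE {V M : Type*} [AddCommGroup V] [AddCommGroup M] [Module k V] [Module k M]
    (F : V ⊗[k] M →ₗ[k] V ⊗[k] V) (Φ : M ⊗[k] M →ₗ[k] M ⊗[k] M) : Prop :=
  m12 F ∘ₗ m13 F ∘ₗ m23 Φ = m23 F ∘ₗ m12 F

/-- The pentagon equation: `Φ₁₂ ∘ Φ₁₃ ∘ Φ₂₃ = Φ₂₃ ∘ Φ₁₂` on `M ⊗ M ⊗ M`. -/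
def PE {M : Type*} [AddCommGroup M] [Module k M]
    (Φ : M ⊗[k] M →ₗ[k] M ⊗[k] M) : Prop :=
  m12 Φ ∘ₗ m13 Φ ∘ₗ m23 Φ = m23 Φ ∘ₗ m12 Φ

/-
Since `End V` is a matrix algebra, `Δ` makes `V ⊗ V` into `V ⊗ M`, where `M` is the image of
`Δ p` for a rank-one idempotent `p`; this gives `F` with `Δ x = F (x ⊗ 1) F⁻¹`. Then both
`S = F₁₂ F₁₃` and `T = F₂₃ F₁₂` carry `x ⊗ 1 ⊗ 1` to `(Δ ⊗ id) Δ x = (id ⊗ Δ) Δ x`, so `S⁻¹ T`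
commutes with `End V ⊗ 1`. That commutant is `1 ⊗ End (M ⊗ M)`, so `S⁻¹ T = Φ₂₃` for an
automorphism `Φ`, and `S Φ₂₃ = T` is the modified pentagon equation.
-/

open LinearMap

section MatrixUnits

variable {R V W : Type*} [CommRing R] [AddCommGroup V] [Module R V] [AddCommGroup W] [Module R W]

theorem LinearMap.mul_smulRight (x : Module.End R V) (f : Module.Dual R V) (v : V) :
    x * f.smulRight v = f.smulRight (x v) := by
  ext u
  simp

theorem Module.Basis.sum_coord_smulRight {ι : Type*} [Fintype ι] (b : Module.Basis ι R V) :
    ∑ i, (b.coord i).smulRight (b i) = 1 := by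
  ext v
  simp [Module.Basis.coord_apply, b.sum_repr v]

theorem AlgHom.exists_linearEquiv_tensor_intertwining_of_basis {ι : Type*} [Fintype ι]
    (b : Module.Basis ι R V) (i₀ : ι) (Δ : Module.End R V →ₐ[R] Module.End R W) :
    ∃ (M : Submodule R W) (F : V ⊗[R] M ≃ₗ[R] W),
      ∀ x, Δ x ∘ₗ F.toLinearMap = F.toLinearMap ∘ₗ x.rTensor M := by
  -- `E v = v ⊗ εᵢ₀` and `e i = bᵢ₀ ⊗ εᵢ` are matrix units; `M` is the image of the
  -- idempotent `e i₀`.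
  let E : V →ₗ[R] Module.End R V := smulRightₗ (b.coord i₀)
  let e i : Module.End R V := (b.coord i).smulRight (b i₀)
  have hE_mul v i : E v * e i = (b.coord i).smulRight v := by
    ext u
    simp [E, e]
  have he_mul_E i v : e i * E v = b.coord i v • e i₀ := by
    ext u
    simp [E, e, smul_smul, mul_comm]
  have he_mul i : e i₀ * e i = e i := hE_mul (b i₀) i
  let M := range (Δ (e i₀))
  have hM (m : M) : Δ (e i₀) m = m := by
    obtain ⟨w, hw⟩ := m.2
    rw [← hw, ← Module.End.mul_apply, ← map_mul, he_mul]
  let F : V ⊗[R] M →ₗ[R] W := lift (lcomp R W M.subtype ∘ₗ Δ.toLinearMap ∘ₗ E)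
  have hF v m : F (v ⊗ₜ m) = Δ (E v) m := rfl
  let π i : W →ₗ[R] M := (Δ (e i)).codRestrict M fun w ↦
    ⟨Δ (e i) w, by rw [← Module.End.mul_apply, ← map_mul, he_mul]⟩
  let G : W →ₗ[R] V ⊗[R] M := ∑ i, TensorProduct.mk R V M (b i) ∘ₗ π i
  have hG w : G w = ∑ i, b i ⊗ₜ π i w := by simp [G]
  have hFG : F ∘ₗ G = LinearMap.id := by
    ext w
    have hπ i : (π i w : W) = Δ (e i) w := rfl
    simp only [LinearMap.comp_apply, hG, map_sum, hF, hπ, ← Module.End.mul_apply, ← map_mul,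
      hE_mul]
    rw [← LinearMap.sum_apply, ← map_sum, b.sum_coord_smulRight, map_one]
    rfl
  have hGF : G ∘ₗ F = LinearMap.id := by
    ext v m
    have hπ i : π i (Δ (E v) m) = b.coord i v • m := by
      ext
      change Δ (e i) (Δ (E v) m) = _
      rw [← Module.End.mul_apply, ← map_mul, he_mul_E, map_smul, LinearMap.smul_apply, hM]
      rfl
    change G (F (v ⊗ₜ m)) = v ⊗ₜ m
    rw [hF, hG]
    simp_rw [hπ, ← smul_tmul, ← sum_tmul, b.coord_apply, b.sum_repr]
  refine ⟨M, .ofLinearMap F G hFG hGF, fun x ↦ ?_⟩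
  ext v m
  simp [hF, ← Module.End.mul_apply, ← map_mul, E, mul_smulRight]

theorem AlgHom.exists_linearEquiv_tensor_intertwining [Module.Free R V] [Module.Finite R V]
    [Nontrivial V] (Δ : Module.End R V →ₐ[R] Module.End R W) :
    ∃ (M : Submodule R W) (F : V ⊗[R] M ≃ₗ[R] W),
      ∀ x, Δ x ∘ₗ F.toLinearMap = F.toLinearMap ∘ₗ x.rTensor M :=
  have := (Module.Free.chooseBasis R V).index_nonempty
  Δ.exists_linearEquiv_tensor_intertwining_of_basis (Module.Free.chooseBasis R V)
    (Classical.arbitrary _)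

end MatrixUnits

theorem LinearEquiv.symm_comp_eq_comp_symm {R X Y : Type*} [CommRing R] [AddCommGroup X]
    [Module R X] [AddCommGroup Y] [Module R Y] (e : X ≃ₗ[R] Y) {a : Module.End R X}
    {d : Module.End R Y} (h : e.toLinearMap ∘ₗ a = d ∘ₗ e) :
    e.symm.toLinearMap ∘ₗ d = a ∘ₗ e.symm := by
  rw [LinearEquiv.eq_comp_toLinearMap_symm, comp_assoc, ← h, ← comp_assoc,
    LinearEquiv.symm_comp, id_comp]

section Commutant

variable {R V N : Type*} [CommRing R] [AddCommGroup V] [Module R V] [AddCommGroup N] [Module R N]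

theorem LinearMap.rTensor_smulRight (f : Module.Dual R V) (v : V) :
    (f.smulRight v).rTensor N =
      TensorProduct.mk R V N v ∘ₗ (TensorProduct.lid R N).toLinearMap ∘ₗ f.rTensor N := by
  ext w t
  simp [smul_tmul]

variable {f : Module.Dual R V} {v₀ : V}

theorem lid_comp_rTensor_comp_lTensor_comp_mk (hf : f v₀ = 1) (α : N →ₗ[R] N) :
    (TensorProduct.lid R N).toLinearMap ∘ₗ f.rTensor N ∘ₗ α.lTensor V ∘ₗ
      TensorProduct.mk R V N v₀ = α := by
  ext t
  simp [hf]

theorem eq_lTensor_of_commute_rTensor (hf : f v₀ = 1) (h : Module.End R (V ⊗[R] N))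
    (hh : ∀ x : Module.End R V, h ∘ₗ x.rTensor N = x.rTensor N ∘ₗ h) :
    h = ((TensorProduct.lid R N).toLinearMap ∘ₗ f.rTensor N ∘ₗ h ∘ₗ
      TensorProduct.mk R V N v₀).lTensor V := by
  ext v t
  calc h (v ⊗ₜ t) = h ((f.smulRight v).rTensor N (v₀ ⊗ₜ t)) := by simp [hf]
    _ = _ := by rw [← comp_apply, hh, comp_apply, rTensor_smulRight]; rfl

theorem exists_linearEquiv_lTensor_of_commute_rTensor (hf : f v₀ = 1)
    (g : V ⊗[R] N ≃ₗ[R] V ⊗[R] N)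
    (hg : ∀ x : Module.End R V, g.toLinearMap ∘ₗ x.rTensor N = x.rTensor N ∘ₗ g) :
    ∃ Φ : N ≃ₗ[R] N, g.toLinearMap = Φ.toLinearMap.lTensor V := by
  let φ := (TensorProduct.lid R N).toLinearMap ∘ₗ f.rTensor N ∘ₗ g.toLinearMap ∘ₗ
    TensorProduct.mk R V N v₀
  let ψ := (TensorProduct.lid R N).toLinearMap ∘ₗ f.rTensor N ∘ₗ g.symm.toLinearMap ∘ₗ
    TensorProduct.mk R V N v₀
  have hφ : g.toLinearMap = φ.lTensor V := eq_lTensor_of_commute_rTensor hf _ hg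
  have hψ : g.symm.toLinearMap = ψ.lTensor V :=
    eq_lTensor_of_commute_rTensor hf _ fun x ↦ g.symm_comp_eq_comp_symm (hg x)
  have inv {α β : N →ₗ[R] N} (h : α.lTensor V ∘ₗ β.lTensor V = LinearMap.id) :
      α ∘ₗ β = LinearMap.id := by
    rw [← lid_comp_rTensor_comp_lTensor_comp_mk hf (α ∘ₗ β), lTensor_comp, h,
      ← lTensor_id, lid_comp_rTensor_comp_lTensor_comp_mk hf]
  refine ⟨.ofLinearMap φ ψ (inv ?_) (inv ?_), hφ⟩
  · rw [← hφ, ← hψ, LinearEquiv.comp_symm]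
  · rw [← hφ, ← hψ, LinearEquiv.symm_comp]

end Commutant

section Rearrangement

variable {A B C P Q R P' Q' R' : Type*}
  [AddCommGroup A] [AddCommGroup B] [AddCommGroup C] [AddCommGroup P] [AddCommGroup Q]
  [AddCommGroup R] [AddCommGroup P'] [AddCommGroup Q'] [AddCommGroup R']
  [Module k A] [Module k B] [Module k C] [Module k P] [Module k Q] [Module k R]
  [Module k P'] [Module k Q'] [Module k R']

theorem m12_comp (G : P' ⊗[k] Q' →ₗ[k] P ⊗[k] Q) (H : A ⊗[k] B →ₗ[k] P' ⊗[k] Q') :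
    m12 (C := C) (G ∘ₗ H) = m12 G ∘ₗ m12 H := by
  ext
  simp [m12]

theorem lTensor_comm_lTensor_comm (x : A ⊗[k] (B ⊗[k] C)) :
    (TensorProduct.comm k C B).toLinearMap.lTensor A
      ((TensorProduct.comm k B C).toLinearMap.lTensor A x) = x := by
  rw [← comp_apply, ← lTensor_comp, TensorProduct.comm_comp_comm, lTensor_id, id_apply]

theorem m13_comp (G : P' ⊗[k] R' →ₗ[k] P ⊗[k] R) (H : A ⊗[k] C →ₗ[k] P' ⊗[k] R') :
    m13 (B := B) (G ∘ₗ H) = m13 G ∘ₗ m13 H := by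
  ext
  simp [m13, lTensor_comm_lTensor_comm]

theorem m12_add (G H : A ⊗[k] B →ₗ[k] P ⊗[k] Q) : m12 (C := C) (G + H) = m12 G + m12 H := by
  ext
  simp [m12]

theorem m13_add (G H : A ⊗[k] C →ₗ[k] P ⊗[k] R) : m13 (B := B) (G + H) = m13 G + m13 H := by
  ext
  simp [m13]

theorem m12_rTensor (x : A →ₗ[k] P) : m12 (C := C) (x.rTensor B) = x.rTensor (B ⊗[k] C) := by
  ext
  simp [m12]

theorem m13_rTensor (x : A →ₗ[k] P) : m13 (B := B) (x.rTensor C) = x.rTensor (B ⊗[k] C) := by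
  ext
  simp [m13]

theorem m12_map (a : A →ₗ[k] P) (b : B →ₗ[k] Q) :
    m12 (C := C) (map a b) = map a (b.rTensor C) := by
  ext
  simp [m12]

theorem m13_map (a : A →ₗ[k] P) (c : C →ₗ[k] R) :
    m13 (B := B) (map a c) = map a (c.lTensor B) := by
  ext
  simp [m13]

def LinearEquiv.m12 (e : A ⊗[k] B ≃ₗ[k] P ⊗[k] Q) : A ⊗[k] (B ⊗[k] C) ≃ₗ[k] P ⊗[k] (Q ⊗[k] C) :=
  (TensorProduct.assoc k A B C).symm ≪≫ₗ e.rTensor C ≪≫ₗ TensorProduct.assoc k P Q C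

def LinearEquiv.m13 (e : A ⊗[k] C ≃ₗ[k] P ⊗[k] R) : A ⊗[k] (B ⊗[k] C) ≃ₗ[k] P ⊗[k] (B ⊗[k] R) :=
  (TensorProduct.comm k B C).lTensor A ≪≫ₗ (TensorProduct.assoc k A C B).symm ≪≫ₗ
    e.rTensor B ≪≫ₗ TensorProduct.assoc k P R B ≪≫ₗ (TensorProduct.comm k R B).lTensor P

theorem LinearEquiv.coe_m12 (e : A ⊗[k] B ≃ₗ[k] P ⊗[k] Q) :
    (e.m12 (C := C) : A ⊗[k] (B ⊗[k] C) →ₗ[k] P ⊗[k] (Q ⊗[k] C)) = _root_.m12 e.toLinearMap :=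
  rfl

theorem LinearEquiv.coe_m13 (e : A ⊗[k] C ≃ₗ[k] P ⊗[k] R) :
    (e.m13 (B := B) : A ⊗[k] (B ⊗[k] C) →ₗ[k] P ⊗[k] (B ⊗[k] R)) = _root_.m13 e.toLinearMap :=
  rfl

end Rearrangement

section Coassociativity

variable {A C V M P Q : Type*} [AddCommGroup A] [AddCommGroup C] [AddCommGroup V]
  [AddCommGroup M] [AddCommGroup P] [AddCommGroup Q]
  [Module k A] [Module k C] [Module k V] [Module k M] [Module k P] [Module k Q]

theorem m23_comp_m12_homTensorHomMap (Δ : Module.End k V →ₗ[k] Module.End k (P ⊗[k] Q))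
    {F : V ⊗[k] M →ₗ[k] P ⊗[k] Q} (hF : ∀ x, Δ x ∘ₗ F = F ∘ₗ x.rTensor M)
    (u : Module.End k A ⊗[k] Module.End k V) :
    m23 F ∘ₗ m12 (homTensorHomMap (.id k) A V A V u) =
      homTensorHomMap (.id k) A (P ⊗[k] Q) A (P ⊗[k] Q) (Δ.lTensor _ u) ∘ₗ m23 F := by
  induction u using TensorProduct.induction_on with
  | zero => ext; simp [m12]
  | tmul a c =>
    simp only [homTensorHomMap_apply, lTensor_tmul, m12_map, m23,
      lTensor_comp_map, ← hF, map_comp_lTensor]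
  | add u v hu hv => simp only [map_add, m12_add, add_comp, comp_add, hu, hv]

theorem m12_comp_m13_homTensorHomMap (Δ : Module.End k V →ₗ[k] Module.End k (P ⊗[k] Q))
    {F : V ⊗[k] M →ₗ[k] P ⊗[k] Q} (hF : ∀ x, Δ x ∘ₗ F = F ∘ₗ x.rTensor M)
    (u : Module.End k V ⊗[k] Module.End k C) :
    m12 F ∘ₗ m13 (homTensorHomMap (.id k) V C V C u) =
      ((TensorProduct.assoc k P Q C).toLinearMap ∘ₗ
        homTensorHomMap (.id k) (P ⊗[k] Q) C (P ⊗[k] Q) C (Δ.rTensor _ u) ∘ₗ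
        (TensorProduct.assoc k P Q C).symm.toLinearMap) ∘ₗ m12 F := by
  have hF' x v m : F (x v ⊗ₜ m) = Δ x (F (v ⊗ₜ m)) := (LinearMap.congr_fun (hF x) (v ⊗ₜ m)).symm
  induction u using TensorProduct.induction_on with
  | zero => ext; simp [m12, m13]
  | tmul a c =>
    ext
    simp [m12, m13_map, hF']
  | add u v hu hv => simp only [map_add, m13_add, add_comp, comp_add, hu, hv]

end Coassociativity

theorem exists_MPE_of_coassoc {V M : Type*} [AddCommGroup V] [Module k V] [FiniteDimensional k V]
    [Nontrivial V] [AddCommGroup M] [Module k M] (Δ : Module.End k V →ₗ[k] Module.End k (V ⊗[k] V))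
    (hcoassoc : ∀ x : Module.End k V,
      homTensorHomEquiv k V (V ⊗[k] V) V (V ⊗[k] V)
          (Δ.lTensor (Module.End k V) ((homTensorHomEquiv k V V V V).symm (Δ x))) =
        (TensorProduct.assoc k V V V).toLinearMap ∘ₗ
          homTensorHomEquiv k (V ⊗[k] V) V (V ⊗[k] V) V
            (Δ.rTensor (Module.End k V) ((homTensorHomEquiv k V V V V).symm (Δ x))) ∘ₗ
          (TensorProduct.assoc k V V V).symm.toLinearMap)
    (F : V ⊗[k] M ≃ₗ[k] V ⊗[k] V) (hF : ∀ x, Δ x ∘ₗ F.toLinearMap = F.toLinearMap ∘ₗ x.rTensor M) :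
    ∃ Φ : M ⊗[k] M ≃ₗ[k] M ⊗[k] M, MPE F.toLinearMap Φ.toLinearMap := by
  let D x := homTensorHomEquiv k V (V ⊗[k] V) V (V ⊗[k] V)
    (Δ.lTensor (Module.End k V) ((homTensorHomEquiv k V V V V).symm (Δ x)))
  let S : V ⊗[k] (M ⊗[k] M) ≃ₗ[k] V ⊗[k] (V ⊗[k] V) := F.m13 ≪≫ₗ F.m12
  let T : V ⊗[k] (M ⊗[k] M) ≃ₗ[k] V ⊗[k] (V ⊗[k] V) := F.m12 ≪≫ₗ F.lTensor V
  have hΔ x : Δ x = homTensorHomMap (.id k) V V V V ((homTensorHomEquiv k V V V V).symm (Δ x)) := by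
    rw [← homTensorHomEquiv_apply, LinearEquiv.apply_symm_apply]
  have hS x : S.toLinearMap ∘ₗ x.rTensor (M ⊗[k] M) = D x ∘ₗ S := by
    simp only [S, LinearEquiv.coe_trans, LinearEquiv.coe_m12, LinearEquiv.coe_m13, comp_assoc]
    rw [← m13_rTensor, ← m13_comp, ← hF, m13_comp, ← comp_assoc, hΔ,
      m12_comp_m13_homTensorHomMap Δ hF, ← homTensorHomEquiv_apply, ← hcoassoc, comp_assoc]
  have hT x : T.toLinearMap ∘ₗ x.rTensor (M ⊗[k] M) = D x ∘ₗ T := by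
    simp only [T, LinearEquiv.coe_trans, LinearEquiv.coe_m12, comp_assoc]
    rw [show (F.lTensor V).toLinearMap = m23 F.toLinearMap from rfl, ← m12_rTensor, ← m12_comp,
      ← hF, m12_comp, ← comp_assoc, ← comp_assoc, hΔ, m23_comp_m12_homTensorHomMap Δ hF,
      ← homTensorHomEquiv_apply, comp_assoc]
  have hg (x : Module.End k V) : (T ≪≫ₗ S.symm).toLinearMap ∘ₗ x.rTensor (M ⊗[k] M) =
      x.rTensor (M ⊗[k] M) ∘ₗ (T ≪≫ₗ S.symm) := by
    rw [LinearEquiv.coe_trans, comp_assoc, hT, ← comp_assoc, S.symm_comp_eq_comp_symm (hS x),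
      comp_assoc]
  obtain ⟨v₀, hv₀⟩ := exists_ne (0 : V)
  obtain ⟨f, hf⟩ := Module.Projective.exists_dual_eq_one k hv₀
  obtain ⟨Φ, hΦ⟩ := exists_linearEquiv_lTensor_of_commute_rTensor hf _ hg
  refine ⟨Φ, ?_⟩
  calc m12 F.toLinearMap ∘ₗ m13 F.toLinearMap ∘ₗ m23 Φ.toLinearMap
      = S.toLinearMap ∘ₗ (T ≪≫ₗ S.symm).toLinearMap := by rw [hΦ]; rfl
    _ = T := by ext; simp

/-- Any coassociative unital algebra homomorphism (comultiplication)
`Δ : End(V) → End(V ⊗ V)` is of the form `Δ(x) = F ∘ (x ⊗ id_M) ∘ F⁻¹` for some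
finite-dimensional `M` and isomorphism `F : V ⊗ M → V ⊗ V` which together with some
automorphism `Φ` of `M ⊗ M` satisfies the modified pentagon equation. -/
theorem stmt3 {V : Type} [AddCommGroup V] [Module k V] [FiniteDimensional k V] [Nontrivial V]
    (Δ : Module.End k V →ₐ[k] Module.End k (V ⊗[k] V))
    -- coassociativity: `(I ⊗ Δ) ∘ Δ = (Δ ⊗ I) ∘ Δ` under `End(A) ⊗ End(B) ≅ End(A ⊗ B)`
    (hcoassoc : ∀ x : Module.End k V,
      homTensorHomEquiv k V (V ⊗[k] V) V (V ⊗[k] V)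
          (Δ.toLinearMap.lTensor (Module.End k V)
            ((homTensorHomEquiv k V V V V).symm (Δ x))) =
        (TensorProduct.assoc k V V V).toLinearMap ∘ₗ
          homTensorHomEquiv k (V ⊗[k] V) V (V ⊗[k] V) V
            (Δ.toLinearMap.rTensor (Module.End k V)
              ((homTensorHomEquiv k V V V V).symm (Δ x))) ∘ₗ
          (TensorProduct.assoc k V V V).symm.toLinearMap) :
    ∃ (M : Type) (_ : AddCommGroup M) (_ : Module k M),
      FiniteDimensional k M ∧
      ∃ (F : V ⊗[k] M ≃ₗ[k] V ⊗[k] V) (Φ : M ⊗[k] M ≃ₗ[k] M ⊗[k] M),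
        MPE F.toLinearMap Φ.toLinearMap ∧
        ∀ x : Module.End k V, Δ x = F.toLinearMap ∘ₗ x.rTensor M ∘ₗ F.symm.toLinearMap := by
  obtain ⟨M, F, hF⟩ := Δ.exists_linearEquiv_tensor_intertwining
  obtain ⟨Φ, hΦ⟩ := exists_MPE_of_coassoc Δ.toLinearMap hcoassoc F hF
  refine ⟨M, inferInstance, inferInstance, inferInstance, F, Φ, hΦ, fun x ↦ ?_⟩
  rw [← comp_assoc, ← hF x, comp_assoc, LinearEquiv.comp_symm, comp_id]

end
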